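/- Let X, Y, Z be random vectors, with W_X, W_Y the Moore–Penrose inverses of Var(X), Var(Y) respectively. If Cov_Y(X,Z) = 0 (adjusted orthogonality of X and Z given Y), then P_X(Z) = P_Y(Z)·P_X(Y), i.e. Cov(Z,X)·W_X = Cov(Z,Y)·W_Y·Cov(Y,X)·W_X. -/

import Mathlib

open MeasureTheory Matrix

variable {Ω : Type*}

/-- The covariance matrix of two random vectors `B` (dimension `m`) and `D` (dimension `n`):
the `(i,j)` entry is `E[Bᵢ·Dⱼ] − E[Bᵢ]·E[Dⱼ]`. -/
noncomputable def cov [MeasurableSpace Ω] (μ : Measure Ω) {m n : ℕ}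
    (B : Fin m → Ω → ℝ) (D : Fin n → Ω → ℝ) : Matrix (Fin m) (Fin n) ℝ :=
  Matrix.of fun i j =>
    (∫ ω, B i ω * D j ω ∂μ) - (∫ ω, B i ω ∂μ) * (∫ ω, D j ω ∂μ)

/-- `W` is a Moore–Penrose inverse of `V`. -/
def IsMoorePenrose {m n : ℕ} (V : Matrix (Fin m) (Fin n) ℝ)
    (W : Matrix (Fin n) (Fin m) ℝ) : Prop :=
  V * W * V = V ∧ W * V * W = W ∧ (V * W)ᵀ = V * W ∧ (W * V)ᵀ = W * V

/-- The adjusted expectation `E_D(B)` (computed with the matrix `W`, intended to be the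
Moore–Penrose inverse of `Var(D)`): the `i`-th component is
`E[Bᵢ] + Σ_j (Cov(B,D)·W)_{ij}·(Dⱼ − E[Dⱼ])`. -/
noncomputable def adjExp [MeasurableSpace Ω] (μ : Measure Ω) {m n : ℕ}
    (B : Fin m → Ω → ℝ) (D : Fin n → Ω → ℝ)
    (W : Matrix (Fin n) (Fin n) ℝ) : Fin m → Ω → ℝ :=
  fun i ω => (∫ ω', B i ω' ∂μ) + ∑ j, (cov μ B D * W) i j * (D j ω - ∫ ω', D j ω' ∂μ)

/-- The adjusted covariance `Cov_D(B,C) = Cov(B − E_D(B), C − E_D(C))`. -/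
noncomputable def adjCov [MeasurableSpace Ω] (μ : Measure Ω) {m p n : ℕ}
    (B : Fin m → Ω → ℝ) (C : Fin p → Ω → ℝ) (D : Fin n → Ω → ℝ)
    (W : Matrix (Fin n) (Fin n) ℝ) : Matrix (Fin m) (Fin p) ℝ :=
  cov μ (fun i ω => B i ω - adjExp μ B D W i ω) (fun j ω => C j ω - adjExp μ C D W j ω)

/-!
For any matrix `W`, the residual `B - E_D(B)` is `B - Cov(B,D) W D` up to a constant, so
bilinearity of the covariance gives `Cov(B - E_D(B), C) = Cov(B,C) - Cov(B,D) W Cov(D,C)`.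
When `W` is the Moore–Penrose inverse of `Var(D)` it is symmetric and `W Var(D) W = W`, and the
adjusted covariance `Cov_D(B,C)` reduces to the same expression. Hence `Cov_Y(Z,X) = 0` reads
`Cov(Z,X) = Cov(Z,Y) W_Y Cov(Y,X)`, and the theorem follows by multiplying with `W_X`.
-/

open ProbabilityTheory

namespace IsMoorePenrose

variable {m n : ℕ} {V : Matrix (Fin m) (Fin n) ℝ} {W W' : Matrix (Fin n) (Fin m) ℝ}

theorem transpose (h : IsMoorePenrose V W) : IsMoorePenrose Vᵀ Wᵀ := by
  obtain ⟨h1, h2, h3, h4⟩ := h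
  refine ⟨?_, ?_, ?_, ?_⟩
  · rw [← transpose_mul, ← transpose_mul, ← Matrix.mul_assoc, h1]
  · rw [← transpose_mul, ← transpose_mul, ← Matrix.mul_assoc, h2]
  · rw [← transpose_mul, transpose_transpose, h4]
  · rw [← transpose_mul, transpose_transpose, h3]

theorem unique (h : IsMoorePenrose V W) (h' : IsMoorePenrose V W') : W = W' := by
  obtain ⟨h1, h2, h3, h4⟩ := h
  obtain ⟨h1', h2', h3', h4'⟩ := h'
  have hVW : V * W = V * W' :=
    calc V * W = V * W' * (V * W) := by rw [← Matrix.mul_assoc, h1']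
      _ = (V * W * (V * W'))ᵀ := by rw [transpose_mul, h3, h3']
      _ = V * W' := by rw [← Matrix.mul_assoc, h1, h3']
  have hWV : W * V = W' * V :=
    calc W * V = W * V * (W' * V) := by rw [Matrix.mul_assoc, ← Matrix.mul_assoc V, h1']
      _ = (W' * V * (W * V))ᵀ := by rw [transpose_mul, h4, h4']
      _ = W' * V := by rw [Matrix.mul_assoc, ← Matrix.mul_assoc V, h1, h4']
  calc W = W * V * W := h2.symm
    _ = W' * V * W' := by rw [hWV, Matrix.mul_assoc, hVW, ← Matrix.mul_assoc]
    _ = W' := h2'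

theorem transpose_eq_self {V W : Matrix (Fin n) (Fin n) ℝ} (h : IsMoorePenrose V W)
    (hV : Vᵀ = V) : Wᵀ = W :=
  (hV ▸ h.transpose).unique h

end IsMoorePenrose

section Covariance

variable [MeasurableSpace Ω] {μ : Measure Ω} {m n p : ℕ}

theorem cov_transpose (B : Fin m → Ω → ℝ) (D : Fin n → Ω → ℝ) : (cov μ B D)ᵀ = cov μ D B := by
  ext i j
  simp [cov, mul_comm]

theorem adjCov_transpose (B : Fin m → Ω → ℝ) (C : Fin p → Ω → ℝ) (D : Fin n → Ω → ℝ)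
    (W : Matrix (Fin n) (Fin n) ℝ) : (adjCov μ B C D W)ᵀ = adjCov μ C B D W :=
  cov_transpose _ _

variable [IsProbabilityMeasure μ] {B : Fin m → Ω → ℝ} {C : Fin p → Ω → ℝ} {D : Fin n → Ω → ℝ}

theorem cov_apply_eq_covariance (hB : ∀ i, MemLp (B i) 2 μ) (hD : ∀ j, MemLp (D j) 2 μ)
    (i : Fin m) (j : Fin n) : cov μ B D i j = cov[B i, D j; μ] :=
  (covariance_eq_sub (hB i) (hD j)).symm

theorem memLp_adjExp (hD : ∀ j, MemLp (D j) 2 μ) (W : Matrix (Fin n) (Fin n) ℝ) (i : Fin m) :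
    MemLp (adjExp μ B D W i) 2 μ := by
  have hsum : MemLp (fun ω => ∑ j, (cov μ B D * W) i j * (D j ω - ∫ ω', D j ω' ∂μ)) 2 μ :=
    memLp_finsetSum _ fun j _ => ((hD j).sub (memLp_const _)).const_mul _
  exact (memLp_const (∫ ω', B i ω' ∂μ)).add hsum

theorem cov_sub_adjExp_left (hB : ∀ i, MemLp (B i) 2 μ) (hC : ∀ k, MemLp (C k) 2 μ)
    (hD : ∀ j, MemLp (D j) 2 μ) (W : Matrix (Fin n) (Fin n) ℝ) :
    cov μ (fun i ω => B i ω - adjExp μ B D W i ω) C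
      = cov μ B C - cov μ B D * W * cov μ D C := by
  set P := cov μ B D * W
  have hPD : ∀ i j, MemLp (fun ω => P i j * D j ω) 2 μ := fun i j => (hD j).const_mul _
  have hPDsum : ∀ i, MemLp (fun ω => ∑ j, P i j * D j ω) 2 μ := fun i =>
    memLp_finsetSum _ fun j _ => hPD i j
  have hres : ∀ i, (fun ω => B i ω - adjExp μ B D W i ω) = fun ω =>
      (B i ω - ∑ j, P i j * D j ω) - (∫ ω', B i ω' ∂μ - ∑ j, P i j * ∫ ω', D j ω' ∂μ) := by
    intro i; funext ω
    simp only [adjExp, mul_sub, Finset.sum_sub_distrib]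
    ring
  have hBP : ∀ i, MemLp (fun ω => B i ω - ∑ j, P i j * D j ω) 2 μ := fun i =>
    (hB i).sub (hPDsum i)
  have hR : ∀ i, MemLp (fun ω => B i ω - adjExp μ B D W i ω) 2 μ := fun i =>
    (hB i).sub (memLp_adjExp hD W i)
  ext i k
  rw [cov_apply_eq_covariance hR hC, hres,
    covariance_sub_const_left ((hBP i).integrable one_le_two),
    covariance_fun_sub_left (hB i) (hPDsum i) (hC k),
    covariance_fun_sum_left (hPD i) (hC k)]
  simp only [covariance_const_mul_left, ← cov_apply_eq_covariance hB hC,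
    ← cov_apply_eq_covariance hD hC, Matrix.sub_apply, Matrix.mul_apply]

theorem adjCov_eq_of_isMoorePenrose (hB : ∀ i, MemLp (B i) 2 μ) (hC : ∀ k, MemLp (C k) 2 μ)
    (hD : ∀ j, MemLp (D j) 2 μ) {W : Matrix (Fin n) (Fin n) ℝ}
    (hW : IsMoorePenrose (cov μ D D) W) :
    adjCov μ B C D W = cov μ B C - cov μ B D * W * cov μ D C := by
  have hWsymm : Wᵀ = W := hW.transpose_eq_self (cov_transpose D D)
  have hRC : ∀ k, MemLp (fun ω => C k ω - adjExp μ C D W k ω) 2 μ := fun k =>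
    (hC k).sub (memLp_adjExp hD W k)
  have hWVW : W * (cov μ D D * (W * cov μ D C)) = W * cov μ D C := by
    rw [← Matrix.mul_assoc, ← Matrix.mul_assoc, hW.2.1]
  rw [adjCov, cov_sub_adjExp_left hB hRC hD, ← cov_transpose _ B, ← cov_transpose _ D,
    cov_sub_adjExp_left hC hB hD, cov_sub_adjExp_left hC hD hD]
  simp only [transpose_sub, transpose_mul, cov_transpose, hWsymm, Matrix.mul_sub,
    Matrix.mul_assoc, hWVW]
  abel

end Covariance

theorem proj_comp_of_adjOrth_general [MeasurableSpace Ω] (μ : Measure Ω) [IsProbabilityMeasure μ]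
    {mx my mz : ℕ} (X : Fin mx → Ω → ℝ) (Y : Fin my → Ω → ℝ) (Z : Fin mz → Ω → ℝ)
    (hX : ∀ i, Measurable (X i) ∧ MemLp (X i) 2 μ)
    (hY : ∀ i, Measurable (Y i) ∧ MemLp (Y i) 2 μ)
    (hZ : ∀ i, Measurable (Z i) ∧ MemLp (Z i) 2 μ)
    (WX : Matrix (Fin mx) (Fin mx) ℝ)
    (WY : Matrix (Fin my) (Fin my) ℝ) (hWY : IsMoorePenrose (cov μ Y Y) WY)
    (horth : adjCov μ X Z Y WY = 0) :
    cov μ Z X * WX = cov μ Z Y * WY * cov μ Y X * WX := by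
  have horth' : adjCov μ Z X Y WY = 0 := by rw [← adjCov_transpose, horth, transpose_zero]
  rw [adjCov_eq_of_isMoorePenrose (fun i => (hZ i).2) (fun i => (hX i).2) (fun i => (hY i).2) hWY,
    sub_eq_zero] at horth'
  rw [horth']

/-- Theorem 1, eq. (14) of the paper: if `Cov_Y(X,Z) = 0` then
`P_X(Z) = P_Y(Z)·P_X(Y)`, i.e. `Cov(Z,X)·W_X = Cov(Z,Y)·W_Y·Cov(Y,X)·W_X`. -/
theorem proj_comp_of_adjOrth [MeasurableSpace Ω] (μ : Measure Ω) [IsProbabilityMeasure μ]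
    {mx my mz : ℕ} (X : Fin mx → Ω → ℝ) (Y : Fin my → Ω → ℝ) (Z : Fin mz → Ω → ℝ)
    (hX : ∀ i, Measurable (X i) ∧ MemLp (X i) 2 μ)
    (hY : ∀ i, Measurable (Y i) ∧ MemLp (Y i) 2 μ)
    (hZ : ∀ i, Measurable (Z i) ∧ MemLp (Z i) 2 μ)
    (WX : Matrix (Fin mx) (Fin mx) ℝ) (hWX : IsMoorePenrose (cov μ X X) WX)
    (WY : Matrix (Fin my) (Fin my) ℝ) (hWY : IsMoorePenrose (cov μ Y Y) WY)
    (horth : adjCov μ X Z Y WY = 0) :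
    cov μ Z X * WX = cov μ Z Y * WY * cov μ Y X * WX :=
  proj_comp_of_adjOrth_general μ X Y Z hX hY hZ WX WY hWY horth
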